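/- arXiv:2111.10911 — 3 statements merged into one kernel-verified Lean document; each statement's English description precedes it below -/
import Mathlib

section
/- Let A be a unital C*-algebra with a faithful tracial state τ, and let e₁, e₂ ∈ A be projections such that τ(e₁) = τ(e₂) and e₁e₂e₁ = (1/λ)e₁ for some real number λ > 0. Then e₂e₁e₂ = (1/λ)e₂. -/
open scoped ComplexOrder

/-!
Put `y = e₂e₁e₂` and `c = 1/λ`. From `e₁e₂e₁ = c e₁` one gets `y² = c y`, so `x = y - c e₂` is a
self-adjoint element with `x² = -c x`. The trace kills `x`: traciality and idempotency give
`τ(y) = τ(e₂e₁) = τ(e₁e₂e₁) = c τ(e₁) = c τ(e₂)`, hence `τ(x*x) = -c τ(x) = 0`, and faithfulness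
forces `x = 0`.
-/

section Compression

variable {R A : Type*} [CommRing R] [Ring A] [Algebra R A]

lemma IsIdempotentElem.compress_mul_self {p q : A} {c : R} (hq : IsIdempotentElem q)
    (h : p * q * p = c • p) : (q * p * q) * (q * p * q) = c • (q * p * q) :=
  calc (q * p * q) * (q * p * q) = q * (p * (q * q) * p) * q := by noncomm_ring
    _ = c • (q * p * q) := by rw [hq.eq, h, mul_smul_comm, smul_mul_assoc]

lemma sub_smul_mul_self_eq_neg_smul {y q : A} {c : R} (hq : IsIdempotentElem q)
    (hy : y * y = c • y) (hqy : q * y = y) (hyq : y * q = y) :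
    (y - c • q) * (y - c • q) = (-c) • (y - c • q) := by
  simp only [sub_mul, mul_sub, smul_mul_assoc, mul_smul_comm, hy, hqy, hyq, hq.eq]
  module

lemma trace_compress_eq {τ : A →ₗ[R] R} (hτ : ∀ a b, τ (a * b) = τ (b * a))
    {p q : A} (hp : IsIdempotentElem p) (hq : IsIdempotentElem q) :
    τ (q * p * q) = τ (p * q * p) :=
  calc τ (q * p * q) = τ (q * q * p) := by rw [hτ, ← mul_assoc]
    _ = τ (p * p * q) := by rw [hq.eq, hτ, hp.eq]
    _ = τ (p * q * p) := by rw [mul_assoc, hτ p]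

end Compression

theorem subproduct_systems_stmt0_general
    (A : Type*) [NormedRing A] [StarRing A]
    [NormedAlgebra ℂ A] [StarModule ℂ A]
    -- `τ` is a state:
    (τ : A →ₗ[ℂ] ℂ)
    -- `τ` is tracial:
    (hτ_tr : ∀ a b : A, τ (a * b) = τ (b * a))
    -- `τ` is faithful:
    (hτ_faithful : ∀ a : A, τ (star a * a) = 0 → a = 0)
    -- `e₁`, `e₂` are projections:
    (e₁ e₂ : A) (he₁_sa : IsSelfAdjoint e₁) (he₁_idem : e₁ * e₁ = e₁)
    (he₂_sa : IsSelfAdjoint e₂) (he₂_idem : e₂ * e₂ = e₂)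
    (lam : ℝ)
    (htrace_eq : τ e₁ = τ e₂)
    (h : e₁ * e₂ * e₁ = ((lam : ℂ))⁻¹ • e₁) :
    e₂ * e₁ * e₂ = ((lam : ℂ))⁻¹ • e₂ := by
  set c : ℂ := ((lam : ℂ))⁻¹
  set y := e₂ * e₁ * e₂
  have hy : y * y = c • y := IsIdempotentElem.compress_mul_self he₂_idem h
  have hx : (y - c • e₂) * (y - c • e₂) = (-c) • (y - c • e₂) :=
    sub_smul_mul_self_eq_neg_smul he₂_idem hy
      (by simp only [y, ← mul_assoc, he₂_idem]) (by simp only [y, mul_assoc, he₂_idem])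
  have hτy : τ y = c * τ e₂ := by
    rw [trace_compress_eq hτ_tr he₁_idem he₂_idem, h, map_smul, smul_eq_mul, htrace_eq]
  have hc_sa : IsSelfAdjoint c := by simp [c, isSelfAdjoint_iff, Complex.conj_ofReal]
  have hx_sa : IsSelfAdjoint (y - c • e₂) := by
    refine .sub ?_ (hc_sa.smul he₂_sa)
    simpa only [y, he₂_sa.star_eq] using he₁_sa.conjugate e₂
  refine sub_eq_zero.mp (hτ_faithful _ ?_)
  rw [hx_sa.star_eq, hx, map_smul, map_sub, map_smul, hτy, smul_eq_mul, smul_eq_mul]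
  ring

/-- **Lemma 1.3.** Let `A` be a unital C*-algebra with a faithful tracial state `τ`, and let
`e₁, e₂ ∈ A` be projections such that `τ(e₁) = τ(e₂)` and `e₁e₂e₁ = (1/λ)e₁` for some real
`λ > 0`. Then `e₂e₁e₂ = (1/λ)e₂`. -/
theorem subproduct_systems_stmt0
    (A : Type*) [NormedRing A] [StarRing A] [CStarRing A]
    [NormedAlgebra ℂ A] [CompleteSpace A] [StarModule ℂ A]
    -- `τ` is a state:
    (τ : A →ₗ[ℂ] ℂ) (hτ_one : τ 1 = 1) (hτ_pos : ∀ a : A, 0 ≤ τ (star a * a))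
    -- `τ` is tracial:
    (hτ_tr : ∀ a b : A, τ (a * b) = τ (b * a))
    -- `τ` is faithful:
    (hτ_faithful : ∀ a : A, τ (star a * a) = 0 → a = 0)
    -- `e₁`, `e₂` are projections:
    (e₁ e₂ : A) (he₁_sa : IsSelfAdjoint e₁) (he₁_idem : e₁ * e₁ = e₁)
    (he₂_sa : IsSelfAdjoint e₂) (he₂_idem : e₂ * e₂ = e₂)
    (lam : ℝ) (hlam : 0 < lam)
    (htrace_eq : τ e₁ = τ e₂)
    (h : e₁ * e₂ * e₁ = ((lam : ℂ))⁻¹ • e₁) :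
    e₂ * e₁ * e₂ = ((lam : ℂ))⁻¹ • e₂ :=
  subproduct_systems_stmt0_general A τ hτ_tr hτ_faithful e₁ e₂ he₁_sa he₁_idem he₂_sa he₂_idem lam
    htrace_eq h
end

section
/- Let H be a complex Hilbert space of finite dimension m ≥ 2 and let A : H → H be a nonzero conjugate-linear operator. Then the vector ξ_A = Σᵢ ξᵢ ⊗ Aξᵢ ∈ H⊗H (for any orthonormal basis (ξᵢ) of H) is Temperley–Lieb if and only if (A²)*(A²) = α·1 for some α > 0 (i.e. A² is a nonzero scalar multiple of a unitary), and in that case the constant λ in the Temperley–Lieb relation equals α⁻¹(Tr(A*A))². Moreover, whenever (e⊗1)(1⊗e)(e⊗1) = (1/λ)(e⊗1) holds for the projection e onto ℂξ_A, one also has (1⊗e)(e⊗1)(1⊗e) = (1/λ)(1⊗e). -/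
noncomputable section

open scoped ComplexConjugate

namespace TLmat

variable {m : ℕ}

/-- The orthogonal projection onto the line `ℂξ ⊆ ℂ^m ⊗ ℂ^m`, written as a matrix. -/
def lineProj (ξ : Fin m × Fin m → ℂ) : Matrix (Fin m × Fin m) (Fin m × Fin m) ℂ :=
  Matrix.of fun u v => ((∑ w, ‖ξ w‖ ^ 2 : ℝ) : ℂ)⁻¹ * (ξ u * conj (ξ v))

/-- The ampliation `e ⊗ 1` of a matrix acting on the first two tensor legs of
`ℂ^m ⊗ ℂ^m ⊗ ℂ^m`. -/
def ampFst (e : Matrix (Fin m × Fin m) (Fin m × Fin m) ℂ) :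
    Matrix (Fin m × Fin m × Fin m) (Fin m × Fin m × Fin m) ℂ :=
  Matrix.of fun x y => e (x.1, x.2.1) (y.1, y.2.1) * (if x.2.2 = y.2.2 then 1 else 0)

/-- The ampliation `1 ⊗ e` of a matrix acting on the last two tensor legs of
`ℂ^m ⊗ ℂ^m ⊗ ℂ^m`. -/
def ampSnd (e : Matrix (Fin m × Fin m) (Fin m × Fin m) ℂ) :
    Matrix (Fin m × Fin m × Fin m) (Fin m × Fin m × Fin m) ℂ :=
  Matrix.of fun x y => (if x.1 = y.1 then 1 else 0) * e (x.2.1, x.2.2) (y.2.1, y.2.2)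

/-- The Temperley–Lieb relation `(e⊗1)(1⊗e)(e⊗1) = (1/λ)(e⊗1)` for the projection `e`
onto the line `ℂξ`. -/
def TLrel (ξ : Fin m × Fin m → ℂ) (lam : ℝ) : Prop :=
  ampFst (lineProj ξ) * ampSnd (lineProj ξ) * ampFst (lineProj ξ) =
    ((lam : ℂ))⁻¹ • ampFst (lineProj ξ)

/-- A nonzero vector `ξ ∈ ℂ^m ⊗ ℂ^m` is Temperley–Lieb if the projection `e = [ℂξ]`
satisfies `(e⊗1)(1⊗e)(e⊗1) = (1/λ)(e⊗1)` for some `λ > 0`. -/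
def IsTemperleyLieb (ξ : Fin m × Fin m → ℂ) : Prop :=
  ξ ≠ 0 ∧ ∃ lam : ℝ, 0 < lam ∧ TLrel ξ lam

/-- The square `A²` of a conjugate-linear operator, as a (complex-)linear operator. -/
def sq (A : EuclideanSpace ℂ (Fin m) →ₛₗ[starRingEnd ℂ] EuclideanSpace ℂ (Fin m)) :
    EuclideanSpace ℂ (Fin m) →ₗ[ℂ] EuclideanSpace ℂ (Fin m) where
  toFun x := A (A x)
  map_add' x y := by simp
  map_smul' c x := by simp [LinearMap.map_smulₛₗ]

/-- The vector `ξ_A = ∑ᵢ ξᵢ ⊗ Aξᵢ ∈ ℂ^m ⊗ ℂ^m` associated with a conjugate-linear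
operator `A`. -/
def xiA (A : EuclideanSpace ℂ (Fin m) →ₛₗ[starRingEnd ℂ] EuclideanSpace ℂ (Fin m)) :
    Fin m × Fin m → ℂ :=
  fun p => A (EuclideanSpace.single p.1 1) p.2

/-- `Tr(A*A) = ∑ᵢ ‖Aξᵢ‖²` for a conjugate-linear operator `A`. -/
def trStar (A : EuclideanSpace ℂ (Fin m) →ₛₗ[starRingEnd ℂ] EuclideanSpace ℂ (Fin m)) : ℝ :=
  ∑ i, ‖A (EuclideanSpace.single i 1)‖ ^ 2


end TLmat

namespace TLaux
open TLmat Matrix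
open scoped InnerProductSpace

variable {m : ℕ}

lemma sum_if_const {α : Type*} [Fintype α] (c : Prop) [Decidable c] (f : α → ℂ) :
    (∑ x, if c then f x else 0) = if c then ∑ x, f x else 0 := by split <;> simp

def matx (ξ : Fin m × Fin m → ℂ) : Matrix (Fin m) (Fin m) ℂ := Matrix.of fun i j => ξ (i,j)
def ncx (ξ : Fin m × Fin m → ℂ) : ℂ := ((∑ w, ‖ξ w‖ ^ 2 : ℝ) : ℂ)
def Dm (ξ : Fin m × Fin m → ℂ) : Matrix (Fin m) (Fin m) ℂ :=
  (matx ξ)ᵀ * (matx ξ)ᴴ * matx ξ * ((matx ξ)ᴴ)ᵀ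
def Em (ξ : Fin m × Fin m → ℂ) : Matrix (Fin m) (Fin m) ℂ :=
  matx ξ * ((matx ξ)ᴴ)ᵀ * (matx ξ)ᵀ * (matx ξ)ᴴ

lemma FS (ξ : Fin m × Fin m → ℂ) (x z : Fin m × Fin m × Fin m) :
    (ampFst (lineProj ξ) * ampSnd (lineProj ξ)) x z =
    ((ncx ξ)⁻¹)^2 * (ξ (x.1, x.2.1) * conj (ξ (z.2.1, z.2.2))) *
      ((((matx ξ)ᴴ)ᵀ * matx ξ) z.1 x.2.2) := by
  simp only [ampFst, ampSnd, lineProj, Matrix.of_apply, Matrix.mul_apply,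
    Fintype.sum_prod_type, mul_ite, ite_mul, mul_one, one_mul, mul_zero, zero_mul,
    sum_if_const, Finset.sum_ite_eq, Finset.sum_ite_eq', Finset.mem_univ, if_true,
    Matrix.transpose_apply, Matrix.conjTranspose_apply, matx, ncx, Complex.star_def]
  rw [Finset.mul_sum]
  exact Finset.sum_congr rfl fun y2 _ => by ring

lemma FSF (ξ : Fin m × Fin m → ℂ) (x w : Fin m × Fin m × Fin m) :
    (ampFst (lineProj ξ) * ampSnd (lineProj ξ) * ampFst (lineProj ξ)) x w =
    ((ncx ξ)⁻¹)^3 * (ξ (x.1, x.2.1) * conj (ξ (w.1, w.2.1))) * (Dm ξ) x.2.2 w.2.2 := by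
  have hD : (Dm ξ) x.2.2 w.2.2
      = ∑ z1, ((((matx ξ)ᴴ)ᵀ * matx ξ) z1 x.2.2) * ((matx ξ * ((matx ξ)ᴴ)ᵀ) z1 w.2.2) := by
    have : Dm ξ = ((((matx ξ)ᴴ)ᵀ * matx ξ))ᵀ * (matx ξ * ((matx ξ)ᴴ)ᵀ) := by
      simp only [Dm, Matrix.transpose_mul, Matrix.transpose_transpose]
      noncomm_ring
    rw [this, Matrix.mul_apply]
    simp [Matrix.transpose_apply]
  rw [Matrix.mul_apply, hD, Finset.mul_sum]
  have key : ∀ z1, (∑ z2, ∑ z3, (ampFst (lineProj ξ) * ampSnd (lineProj ξ)) x (z1,z2,z3)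
      * (ampFst (lineProj ξ)) (z1,z2,z3) w)
      = ((ncx ξ)⁻¹)^3 * (ξ (x.1, x.2.1) * conj (ξ (w.1, w.2.1))) *
        (((((matx ξ)ᴴ)ᵀ * matx ξ) z1 x.2.2) * ((matx ξ * ((matx ξ)ᴴ)ᵀ) z1 w.2.2)) := by
    intro z1
    simp only [FS]
    simp only [ncx, ampFst, lineProj, Matrix.of_apply, mul_ite, ite_mul, mul_one, one_mul,
      mul_zero, zero_mul, sum_if_const, Finset.sum_ite_eq, Finset.sum_ite_eq',
      Finset.mem_univ, if_true]
    rw [show ((matx ξ * ((matx ξ)ᴴ)ᵀ) z1 w.2.2)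
        = ∑ z2, ξ (z1, z2) * conj (ξ (z2, w.2.2)) from by
      rw [Matrix.mul_apply]
      simp [matx, Matrix.transpose_apply, Matrix.conjTranspose_apply, Complex.star_def]]
    rw [Finset.mul_sum, Finset.mul_sum]
    exact Finset.sum_congr rfl fun z2 _ => by ring
  rw [show (∑ z, (ampFst (lineProj ξ) * ampSnd (lineProj ξ)) x z * (ampFst (lineProj ξ)) z w)
      = ∑ z1, ∑ z2, ∑ z3, (ampFst (lineProj ξ) * ampSnd (lineProj ξ)) x (z1,z2,z3)
        * (ampFst (lineProj ξ)) (z1,z2,z3) w from by simp [Fintype.sum_prod_type]]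
  exact Finset.sum_congr rfl fun z1 _ => key z1

lemma SF (ξ : Fin m × Fin m → ℂ) (x z : Fin m × Fin m × Fin m) :
    (ampSnd (lineProj ξ) * ampFst (lineProj ξ)) x z =
    ((ncx ξ)⁻¹)^2 * (ξ (x.2.1, x.2.2) * conj (ξ (z.1, z.2.1))) *
      ((matx ξ * ((matx ξ)ᴴ)ᵀ) x.1 z.2.2) := by
  simp only [ampFst, ampSnd, lineProj, Matrix.of_apply, Matrix.mul_apply,
    Fintype.sum_prod_type, mul_ite, ite_mul, mul_one, one_mul, mul_zero, zero_mul,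
    sum_if_const, Finset.sum_ite_eq, Finset.sum_ite_eq', Finset.mem_univ, if_true,
    Matrix.transpose_apply, Matrix.conjTranspose_apply, matx, ncx, Complex.star_def]
  rw [Finset.mul_sum]
  exact Finset.sum_congr rfl fun y2 _ => by ring

lemma SFS (ξ : Fin m × Fin m → ℂ) (x w : Fin m × Fin m × Fin m) :
    (ampSnd (lineProj ξ) * ampFst (lineProj ξ) * ampSnd (lineProj ξ)) x w =
    ((ncx ξ)⁻¹)^3 * (ξ (x.2.1, x.2.2) * conj (ξ (w.2.1, w.2.2))) * (Em ξ) x.1 w.1 := by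
  have hE : (Em ξ) x.1 w.1
      = ∑ z3, ((matx ξ * ((matx ξ)ᴴ)ᵀ) x.1 z3) * ((((matx ξ)ᴴ)ᵀ * matx ξ) w.1 z3) := by
    have : Em ξ = (matx ξ * ((matx ξ)ᴴ)ᵀ) * ((((matx ξ)ᴴ)ᵀ * matx ξ))ᵀ := by
      simp only [Em, Matrix.transpose_mul, Matrix.transpose_transpose]
      noncomm_ring
    rw [this, Matrix.mul_apply]
    simp [Matrix.transpose_apply]
  rw [Matrix.mul_apply, hE, Finset.mul_sum]
  have key : ∀ z1, (∑ z2, ∑ z3, (ampSnd (lineProj ξ) * ampFst (lineProj ξ)) x (z1,z2,z3)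
      * (ampSnd (lineProj ξ)) (z1,z2,z3) w)
      = if z1 = w.1 then (∑ z3, ((ncx ξ)⁻¹)^3 * (ξ (x.2.1, x.2.2) * conj (ξ (w.2.1, w.2.2))) *
        (((matx ξ * ((matx ξ)ᴴ)ᵀ) x.1 z3) * ((((matx ξ)ᴴ)ᵀ * matx ξ) w.1 z3))) else 0 := by
    intro z1
    simp only [SF]
    simp only [ncx, ampFst, ampSnd, lineProj, Matrix.of_apply, mul_ite, ite_mul, mul_one,
      one_mul, mul_zero, zero_mul, sum_if_const, Finset.sum_ite_eq, Finset.sum_ite_eq',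
      Finset.mem_univ, if_true]
    split
    · next h =>
      subst h
      rw [Finset.sum_comm]
      refine Finset.sum_congr rfl fun z3 _ => ?_
      rw [show ((((matx ξ)ᴴ)ᵀ * matx ξ) w.1 z3)
          = ∑ z2, conj (ξ (w.1, z2)) * ξ (z2, z3) from by
        rw [Matrix.mul_apply]
        simp [matx, Matrix.transpose_apply, Matrix.conjTranspose_apply, Complex.star_def]]
      rw [Finset.mul_sum, Finset.mul_sum]
      exact Finset.sum_congr rfl fun z2 _ => by ring
    · simp
  rw [show (∑ z, (ampSnd (lineProj ξ) * ampFst (lineProj ξ)) x z * (ampSnd (lineProj ξ)) z w)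
      = ∑ z1, ∑ z2, ∑ z3, (ampSnd (lineProj ξ) * ampFst (lineProj ξ)) x (z1,z2,z3)
        * (ampSnd (lineProj ξ)) (z1,z2,z3) w from by simp [Fintype.sum_prod_type]]
  rw [Finset.sum_congr rfl fun z1 _ => key z1]
  simp

lemma expand (A : EuclideanSpace ℂ (Fin m) →ₛₗ[starRingEnd ℂ] EuclideanSpace ℂ (Fin m))
    (v : EuclideanSpace ℂ (Fin m)) (j : Fin m) :
    A v j = ∑ t, conj (v t) * A (EuclideanSpace.single t 1) j := by
  have hv : v = ∑ t, v t • EuclideanSpace.single t (1:ℂ) := by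
    ext j
    rw [WithLp.ofLp_sum, Finset.sum_apply]
    simp [EuclideanSpace.single_apply]
  conv_lhs => rw [hv]
  rw [map_sum, WithLp.ofLp_sum, Finset.sum_apply]
  simp [LinearMap.map_smulₛₗ]

/-- matrix of sq A -/
def Mmat (A : EuclideanSpace ℂ (Fin m) →ₛₗ[starRingEnd ℂ] EuclideanSpace ℂ (Fin m)) :
    Matrix (Fin m) (Fin m) ℂ := (matx (xiA A))ᵀ * (matx (xiA A))ᴴ

lemma sq_single (A : EuclideanSpace ℂ (Fin m) →ₛₗ[starRingEnd ℂ] EuclideanSpace ℂ (Fin m))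
    (i k : Fin m) : sq A (EuclideanSpace.single i 1) k = Mmat A k i := by
  show A (A (EuclideanSpace.single i 1)) k = _
  rw [expand]
  simp only [Mmat, Matrix.mul_apply, Matrix.transpose_apply, Matrix.conjTranspose_apply,
    matx, xiA, Matrix.of_apply]
  exact Finset.sum_congr rfl fun t _ => by rw [Complex.star_def]; ring

lemma bridge (A : EuclideanSpace ℂ (Fin m) →ₛₗ[starRingEnd ℂ] EuclideanSpace ℂ (Fin m)) (α : ℝ) :
    (LinearMap.adjoint (sq A) ∘ₗ sq A = (α : ℂ) • LinearMap.id) ↔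
    (Mmat A)ᴴ * (Mmat A) = (α : ℂ) • (1 : Matrix (Fin m) (Fin m) ℂ) := by
  constructor
  · intro h
    ext k i
    have h2 := congrArg (fun f => f (EuclideanSpace.single i (1:ℂ)) k) h
    simp only [LinearMap.comp_apply, LinearMap.smul_apply, LinearMap.id_apply] at h2
    have lhs : (LinearMap.adjoint (sq A)) (sq A (EuclideanSpace.single i 1)) k
        = ((Mmat A)ᴴ * Mmat A) k i := by
      have : (LinearMap.adjoint (sq A)) (sq A (EuclideanSpace.single i 1)) k
          = ⟪EuclideanSpace.single k (1:ℂ), (LinearMap.adjoint (sq A)) (sq A (EuclideanSpace.single i 1))⟫_ℂ := by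
        simp [EuclideanSpace.inner_single_left]
      rw [this, LinearMap.adjoint_inner_right]
      rw [show (⟪sq A (EuclideanSpace.single k (1:ℂ)), sq A (EuclideanSpace.single i 1)⟫_ℂ)
        = ∑ j, conj (sq A (EuclideanSpace.single k (1:ℂ)) j) * sq A (EuclideanSpace.single i 1) j from by
          simp [PiLp.inner_apply, RCLike.inner_apply]
          exact Finset.sum_congr rfl fun _ _ => mul_comm _ _]
      simp only [sq_single, Matrix.mul_apply, Matrix.conjTranspose_apply, Complex.star_def]
    rw [lhs] at h2
    rw [h2]
    simp [Matrix.smul_apply, Matrix.one_apply, EuclideanSpace.single_apply]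
  · intro h
    apply Module.Basis.ext (EuclideanSpace.basisFun (Fin m) ℂ).toBasis
    intro i
    ext k
    have lhs : (LinearMap.adjoint (sq A)) (sq A ((EuclideanSpace.basisFun (Fin m) ℂ).toBasis i)) k
        = ((Mmat A)ᴴ * Mmat A) k i := by
      rw [show ((EuclideanSpace.basisFun (Fin m) ℂ).toBasis i) = EuclideanSpace.single i 1 from by
        rw [OrthonormalBasis.coe_toBasis, EuclideanSpace.basisFun_apply]]
      have : (LinearMap.adjoint (sq A)) (sq A (EuclideanSpace.single i 1)) k
          = ⟪EuclideanSpace.single k (1:ℂ), (LinearMap.adjoint (sq A)) (sq A (EuclideanSpace.single i 1))⟫_ℂ := by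
        simp [EuclideanSpace.inner_single_left]
      rw [this, LinearMap.adjoint_inner_right]
      rw [show (⟪sq A (EuclideanSpace.single k (1:ℂ)), sq A (EuclideanSpace.single i 1)⟫_ℂ)
        = ∑ j, conj (sq A (EuclideanSpace.single k (1:ℂ)) j) * sq A (EuclideanSpace.single i 1) j from by
          simp [PiLp.inner_apply, RCLike.inner_apply]
          exact Finset.sum_congr rfl fun _ _ => mul_comm _ _]
      simp only [sq_single, Matrix.mul_apply, Matrix.conjTranspose_apply, Complex.star_def]
    simp only [LinearMap.comp_apply]
    rw [lhs, h]
    rw [show ((EuclideanSpace.basisFun (Fin m) ℂ).toBasis i) = EuclideanSpace.single i 1 from by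
      rw [OrthonormalBasis.coe_toBasis, EuclideanSpace.basisFun_apply]]
    simp [Matrix.smul_apply, Matrix.one_apply, EuclideanSpace.single_apply]

lemma swap {n : Type*} [Fintype n] [DecidableEq n] (M : Matrix n n ℂ) (β : ℂ) (hβ : β ≠ 0)
    (h : M * Mᴴ = β • 1) : Mᴴ * M = β • 1 := by
  have h1 : M * (β⁻¹ • Mᴴ) = 1 := by
    rw [Matrix.mul_smul, h, smul_smul, inv_mul_cancel₀ hβ, one_smul]
  have h2 := mul_eq_one_comm.mp h1
  calc Mᴴ * M = β • ((β⁻¹ • Mᴴ) * M) := by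
        rw [Matrix.smul_mul, smul_smul, mul_inv_cancel₀ hβ, one_smul]
    _ = β • 1 := by rw [h2]

lemma tct (X : Matrix (Fin m) (Fin m) ℂ) : (Xᵀ)ᴴ = (Xᴴ)ᵀ := by
  ext i j
  simp [Matrix.conjTranspose_apply, Matrix.transpose_apply]

lemma Dm_eq (A : EuclideanSpace ℂ (Fin m) →ₛₗ[starRingEnd ℂ] EuclideanSpace ℂ (Fin m)) :
    Dm (xiA A) = Mmat A * (Mmat A)ᴴ := by
  simp only [Dm, Mmat, Matrix.conjTranspose_mul, tct,
    Matrix.conjTranspose_conjTranspose]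
  noncomm_ring

lemma Em_eq (A : EuclideanSpace ℂ (Fin m) →ₛₗ[starRingEnd ℂ] EuclideanSpace ℂ (Fin m)) :
    Em (xiA A) = (Mmat A)ᴴ * Mmat A := by
  simp only [Em, Mmat, Matrix.conjTranspose_mul, tct,
    Matrix.conjTranspose_conjTranspose]
  noncomm_ring

lemma lineProj_apply (ξ : Fin m × Fin m → ℂ) (u v : Fin m × Fin m) :
    lineProj ξ u v = (ncx ξ)⁻¹ * (ξ u * conj (ξ v)) := rfl

lemma TLiff (ξ : Fin m × Fin m → ℂ) (p0 : Fin m × Fin m) (hp0 : ξ p0 ≠ 0)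
    (hN : (0:ℝ) < ∑ w, ‖ξ w‖ ^ 2) (lam : ℝ) :
    TLrel ξ lam ↔ Dm ξ = ((lam : ℂ)⁻¹ * (ncx ξ)^2) • 1 := by
  have hc : ncx ξ ≠ 0 := by
    simp only [ncx, ne_eq, Complex.ofReal_eq_zero]
    exact ne_of_gt hN
  have ht : ξ p0 * conj (ξ p0) ≠ 0 := mul_ne_zero hp0 (by simp [hp0])
  have hpow : ncx ξ ^ 2 * ((ncx ξ)⁻¹)^3 = (ncx ξ)⁻¹ := by
    rw [inv_pow]
    field_simp
  constructor
  · intro h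
    ext k r
    have h2 := congrFun (congrFun h (p0.1, p0.2, k)) (p0.1, p0.2, r)
    rw [FSF] at h2
    simp only [Matrix.smul_apply, ampFst, Matrix.of_apply, lineProj_apply, Prod.mk.eta,
      smul_eq_mul, Matrix.smul_apply, Matrix.one_apply] at h2 ⊢
    have hcc : ((ncx ξ)⁻¹)^3 * (ξ p0 * conj (ξ p0)) ≠ 0 :=
      mul_ne_zero (pow_ne_zero _ (inv_ne_zero hc)) ht
    refine mul_left_cancel₀ hcc ?_
    rw [show ((ncx ξ)⁻¹)^3 * (ξ p0 * conj (ξ p0)) * Dm ξ k r = _ from h2]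
    rcases eq_or_ne k r with hkr | hkr
    · simp only [hkr, if_true]
      linear_combination (-(ξ p0 * conj (ξ p0)) * ((lam:ℂ))⁻¹) * hpow
    · simp [hkr]
  · intro h
    ext x w
    rw [FSF, h]
    simp only [Matrix.smul_apply, ampFst, Matrix.of_apply, lineProj_apply, smul_eq_mul,
      Matrix.one_apply]
    rcases eq_or_ne x.2.2 w.2.2 with hkr | hkr
    · simp only [hkr, if_true]
      linear_combination (ξ (x.1, x.2.1) * conj (ξ (w.1, w.2.1)) * ((lam:ℂ))⁻¹) * hpow
    · simp [hkr]

lemma xiA_ne (A : EuclideanSpace ℂ (Fin m) →ₛₗ[starRingEnd ℂ] EuclideanSpace ℂ (Fin m))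
    (hA : A ≠ 0) : xiA A ≠ 0 := by
  intro h
  apply hA
  ext v j
  rw [expand]
  have : ∀ p : Fin m × Fin m, xiA A p = 0 := fun p => congrFun h p
  simp only [LinearMap.zero_apply]
  rw [show (0 : EuclideanSpace ℂ (Fin m)) j = 0 from rfl]
  refine Finset.sum_eq_zero fun t _ => ?_
  rw [show A (EuclideanSpace.single t 1) j = xiA A (t, j) from rfl, this, mul_zero]

lemma normsum_pos (ξ : Fin m × Fin m → ℂ) (hξ : ξ ≠ 0) :
    (0:ℝ) < ∑ w, ‖ξ w‖ ^ 2 := by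
  obtain ⟨p, hp⟩ := Function.ne_iff.mp hξ
  refine Finset.sum_pos' (fun w _ => by positivity) ⟨p, Finset.mem_univ p, ?_⟩
  exact pow_pos (norm_pos_iff.mpr hp) 2

lemma trStar_eq (A : EuclideanSpace ℂ (Fin m) →ₛₗ[starRingEnd ℂ] EuclideanSpace ℂ (Fin m)) :
    trStar A = ∑ w, ‖xiA A w‖ ^ 2 := by
  rw [trStar, Fintype.sum_prod_type]
  refine Finset.sum_congr rfl fun i _ => ?_
  rw [EuclideanSpace.norm_eq, Real.sq_sqrt (by positivity)]
  rfl

end TLaux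

open TLmat in
/-- **Lemma 1.4 (+ Lemma 1.3).** For a nonzero conjugate-linear operator
`A : ℂ^m → ℂ^m` (`m ≥ 2`), the vector `ξ_A = ∑ᵢ ξᵢ ⊗ Aξᵢ` is Temperley–Lieb if and only
if `(A²)*(A²) = α·1` for some `α > 0`; in that case the Temperley–Lieb constant `λ`
equals `α⁻¹ (Tr A*A)²`. Moreover whenever `(e⊗1)(1⊗e)(e⊗1) = (1/λ)(e⊗1)` one also has
`(1⊗e)(e⊗1)(1⊗e) = (1/λ)(1⊗e)`. -/
theorem subproduct_systems_stmt1
    (m : ℕ) (hm : 2 ≤ m)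
    (A : EuclideanSpace ℂ (Fin m) →ₛₗ[starRingEnd ℂ] EuclideanSpace ℂ (Fin m))
    (hA : A ≠ 0) :
    (IsTemperleyLieb (xiA A) ↔
      ∃ α : ℝ, 0 < α ∧
        LinearMap.adjoint (sq A) ∘ₗ sq A = (α : ℂ) • LinearMap.id) ∧
    (∀ α : ℝ, 0 < α →
      LinearMap.adjoint (sq A) ∘ₗ sq A = (α : ℂ) • LinearMap.id →
      ∀ lam : ℝ, 0 < lam → TLrel (xiA A) lam → lam = α⁻¹ * trStar A ^ 2) ∧
    (∀ lam : ℝ, 0 < lam → TLrel (xiA A) lam →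
      ampSnd (lineProj (xiA A)) * ampFst (lineProj (xiA A)) * ampSnd (lineProj (xiA A)) =
        ((lam : ℂ))⁻¹ • ampSnd (lineProj (xiA A))) := by
    classical
  set ξ := xiA A with hξdef
  have hξ : ξ ≠ 0 := TLaux.xiA_ne A hA
  obtain ⟨p0, hp0⟩ := Function.ne_iff.mp hξ
  have hp0' : ξ p0 ≠ 0 := hp0
  have hN : (0:ℝ) < ∑ w, ‖ξ w‖ ^ 2 := TLaux.normsum_pos ξ hξ
  have hc : TLaux.ncx ξ ≠ 0 := by
    simp only [TLaux.ncx, ne_eq, Complex.ofReal_eq_zero]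
    exact ne_of_gt hN
  have hNc : TLaux.ncx ξ = ((∑ w, ‖ξ w‖ ^ 2 : ℝ) : ℂ) := rfl
  refine ⟨⟨?_, ?_⟩, ?_, ?_⟩
  · rintro ⟨-, lam, hlam, htl⟩
    have hD := (TLaux.TLiff ξ p0 hp0' hN lam).mp htl
    refine ⟨lam⁻¹ * (∑ w, ‖ξ w‖ ^ 2) ^ 2, by positivity, ?_⟩
    rw [TLaux.bridge, ← TLaux.Em_eq]
    have hβ : ((lam:ℂ)⁻¹ * (TLaux.ncx ξ) ^ 2) ≠ 0 :=
      mul_ne_zero (inv_ne_zero (by exact_mod_cast ne_of_gt hlam)) (pow_ne_zero _ hc)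
    have hswap := TLaux.swap (TLaux.Mmat A) _ hβ (by rw [← TLaux.Dm_eq]; exact hD)
    rw [← TLaux.Em_eq] at hswap
    rw [hswap]
    congr 1
    rw [hNc]
    push_cast
    ring
  · rintro ⟨α, hα, hcond⟩
    have hEm : TLaux.Em ξ = (α:ℂ) • 1 := by
      rw [TLaux.Em_eq]; exact (TLaux.bridge A α).mp hcond
    have hα' : ((α:ℝ):ℂ) ≠ 0 := by exact_mod_cast ne_of_gt hα
    have hDm : TLaux.Dm ξ = (α:ℂ) • 1 := by
      have h1 : Matrix.conjTranspose (TLaux.Mmat A) * Matrix.conjTranspose (Matrix.conjTranspose (TLaux.Mmat A)) = (α:ℂ) • 1 := by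
        rw [Matrix.conjTranspose_conjTranspose, ← TLaux.Em_eq]; exact hEm
      have h2 := TLaux.swap (Matrix.conjTranspose (TLaux.Mmat A)) _ hα' h1
      rw [Matrix.conjTranspose_conjTranspose] at h2
      rw [TLaux.Dm_eq]; exact h2
    refine ⟨hξ, (∑ w, ‖ξ w‖ ^ 2) ^ 2 / α, by positivity, ?_⟩
    rw [TLaux.TLiff ξ p0 hp0' hN, hDm]
    congr 1
    rw [hNc]
    have hNne : (∑ w, ‖ξ w‖ ^ 2) ≠ 0 := ne_of_gt hN
    have hαne : (α:ℝ) ≠ 0 := ne_of_gt hα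
    rw [show (((∑ w, ‖ξ w‖ ^ 2) ^ 2 / α : ℝ) : ℂ) = ((∑ w, ‖ξ w‖ ^ 2 : ℝ):ℂ) ^ 2 / (α:ℂ) from by
      push_cast; ring]
    rw [inv_div]
    exact (div_mul_cancel₀ _ (pow_ne_zero 2 (Complex.ofReal_ne_zero.mpr hNne))).symm
  · intro α hα hcond lam hlam htl
    have hEm : TLaux.Em ξ = (α:ℂ) • 1 := by
      rw [TLaux.Em_eq]; exact (TLaux.bridge A α).mp hcond
    have hα' : ((α:ℝ):ℂ) ≠ 0 := by exact_mod_cast ne_of_gt hα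
    have hDm2 : TLaux.Dm ξ = (α:ℂ) • 1 := by
      have h1 : Matrix.conjTranspose (TLaux.Mmat A) * Matrix.conjTranspose (Matrix.conjTranspose (TLaux.Mmat A)) = (α:ℂ) • 1 := by
        rw [Matrix.conjTranspose_conjTranspose, ← TLaux.Em_eq]; exact hEm
      have h2 := TLaux.swap (Matrix.conjTranspose (TLaux.Mmat A)) _ hα' h1
      rw [Matrix.conjTranspose_conjTranspose] at h2
      rw [TLaux.Dm_eq]; exact h2
    have hDm1 := (TLaux.TLiff ξ p0 hp0' hN lam).mp htl
    have i0 : Fin m := ⟨0, by omega⟩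
    have hent := congrFun (congrFun (hDm1.symm.trans hDm2) i0) i0
    simp only [Matrix.smul_apply, Matrix.one_apply_eq, smul_eq_mul, mul_one] at hent
    have hre : lam⁻¹ * (∑ w, ‖ξ w‖ ^ 2) ^ 2 = α := by
      have : (((lam⁻¹ * (∑ w, ‖ξ w‖ ^ 2) ^ 2 : ℝ)) : ℂ) = ((α:ℝ):ℂ) := by
        rw [← hent, hNc]; push_cast; ring
      exact_mod_cast this
    have hTr : trStar A = ∑ w, ‖ξ w‖ ^ 2 := TLaux.trStar_eq A
    rw [hTr]
    have hlamne : lam ≠ 0 := ne_of_gt hlam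
    field_simp at hre ⊢
    nlinarith [hre]
  · intro lam hlam htl
    have hDm := (TLaux.TLiff ξ p0 hp0' hN lam).mp htl
    have hβ : ((lam:ℂ)⁻¹ * (TLaux.ncx ξ) ^ 2) ≠ 0 :=
      mul_ne_zero (inv_ne_zero (by exact_mod_cast ne_of_gt hlam)) (pow_ne_zero _ hc)
    have hEm : TLaux.Em ξ = ((lam:ℂ)⁻¹ * (TLaux.ncx ξ) ^ 2) • 1 := by
      rw [TLaux.Em_eq]
      exact TLaux.swap (TLaux.Mmat A) _ hβ (by rw [← TLaux.Dm_eq]; exact hDm)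
    have hpow : TLaux.ncx ξ ^ 2 * ((TLaux.ncx ξ)⁻¹)^3 = (TLaux.ncx ξ)⁻¹ := by
      rw [inv_pow]
      field_simp
    ext x w
    rw [TLaux.SFS, hEm]
    simp only [Matrix.smul_apply, TLmat.ampSnd, Matrix.of_apply, TLaux.lineProj_apply,
      smul_eq_mul, Matrix.one_apply]
    rcases eq_or_ne x.1 w.1 with hkr | hkr
    · simp only [hkr, if_true]
      linear_combination (ξ (x.2.1, x.2.2) * conj (ξ (w.2.1, w.2.2)) * ((lam:ℂ))⁻¹) * hpow
    · simp [hkr]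
end
end

section
/- Let m ≥ 2, let A = (a_{ij}) be a nonzero m×m complex matrix, and let ξ = Σ_{i,j} a_{ij} e_i⊗e_j ∈ ℂ^m⊗ℂ^m, where (e_i) is the standard orthonormal basis. Then ξ is Temperley–Lieb if and only if A·Ā is a nonzero scalar multiple of a unitary matrix (where Ā = (conj(a_{ij}))), i.e. (AĀ)*(AĀ) = c·1 for some c > 0. -/
noncomputable section

open scoped ComplexConjugate

namespace TLmat

variable {m : ℕ}

/-- Entrywise formula for the triple product `(e⊗1)(1⊗e)(e⊗1)`. -/
lemma lhs_entry (A : Matrix (Fin m) (Fin m) ℂ) (x y : Fin m × Fin m × Fin m) :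
    (ampFst (lineProj (fun p : Fin m × Fin m => A p.1 p.2)) *
     ampSnd (lineProj (fun p : Fin m × Fin m => A p.1 p.2)) *
     ampFst (lineProj (fun p : Fin m × Fin m => A p.1 p.2))) x y =
    (((∑ p : Fin m × Fin m, ‖A p.1 p.2‖ ^ 2 : ℝ) : ℂ))⁻¹ ^ 3 *
      (A x.1 x.2.1 * conj (A y.1 y.2.1)) *
      ∑ a, ∑ b, ∑ c, conj (A a b) * A b x.2.2 * (conj (A c y.2.2) * A a c) := by
  simp only [Matrix.mul_apply, ampFst, ampSnd, lineProj, Matrix.of_apply,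
    Fintype.sum_prod_type, mul_ite, ite_mul, mul_zero, zero_mul, mul_one, one_mul,
    Finset.sum_ite_eq, Finset.sum_ite_eq', Finset.sum_ite_irrel, Finset.sum_const_zero,
    Finset.mem_univ, if_true]
  rw [Finset.mul_sum]
  refine Finset.sum_congr rfl fun a _ => ?_
  simp only [Finset.sum_mul, Finset.mul_sum]
  rw [Finset.sum_comm]
  exact Finset.sum_congr rfl fun i _ => Finset.sum_congr rfl fun c _ => by ring

/-- Entrywise formula for `(AĀ)*(AĀ)`. -/
lemma BB_entry (A : Matrix (Fin m) (Fin m) ℂ) (k r : Fin m) :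
    ((A * A.map (starRingEnd ℂ)).conjTranspose * (A * A.map (starRingEnd ℂ))) k r =
    ∑ a, ∑ b, ∑ c, conj (A a b) * A b k * (conj (A c r) * A a c) := by
  simp only [Matrix.mul_apply, Matrix.conjTranspose_apply, Matrix.map_apply, map_sum, map_mul,
    RingHomCompTriple.comp_apply, Complex.conj_conj, star_sum, star_mul', RCLike.star_def]
  refine Finset.sum_congr rfl fun a _ => ?_
  rw [Finset.sum_mul]
  refine Finset.sum_congr rfl fun b _ => ?_
  rw [Finset.mul_sum]
  exact Finset.sum_congr rfl fun c _ => by simp only [RingHom.id_apply]; ring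

/-- Entrywise formula for the right-hand side `λ⁻¹ • (e⊗1)`. -/
lemma rhs_entry (A : Matrix (Fin m) (Fin m) ℂ) (lam : ℝ) (x y : Fin m × Fin m × Fin m) :
    (((lam : ℂ))⁻¹ • ampFst (lineProj (fun p : Fin m × Fin m => A p.1 p.2))) x y =
    ((lam : ℂ))⁻¹ * ((((∑ p : Fin m × Fin m, ‖A p.1 p.2‖ ^ 2 : ℝ) : ℂ))⁻¹ *
      (A x.1 x.2.1 * conj (A y.1 y.2.1)) * (if x.2.2 = y.2.2 then 1 else 0)) := by
  simp only [Matrix.smul_apply, ampFst, lineProj, Matrix.of_apply, smul_eq_mul]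

end TLmat

open TLmat in
/-- A quadratic polynomial `P = ∑_{i,j} a_{ij} XᵢXⱼ`, identified with the vector
`ξ = ∑_{i,j} a_{ij} eᵢ ⊗ eⱼ ∈ ℂ^m ⊗ ℂ^m`, is Temperley–Lieb if and only if `A·Ā` is a
nonzero scalar multiple of a unitary matrix, where `A = (a_{ij})`. -/
theorem subproduct_systems_stmt3
    (m : ℕ) (hm : 2 ≤ m)
    (A : Matrix (Fin m) (Fin m) ℂ) (hA : A ≠ 0) :
    IsTemperleyLieb (fun p : Fin m × Fin m => A p.1 p.2) ↔
      ∃ c : ℝ, 0 < c ∧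
        (A * A.map (starRingEnd ℂ)).conjTranspose * (A * A.map (starRingEnd ℂ)) = (c : ℂ) • 1 := by
  -- basic preliminaries
  obtain ⟨p₀, hp₀⟩ : ∃ p : Fin m × Fin m, A p.1 p.2 ≠ 0 := by
    by_contra h
    push_neg at h
    exact hA (Matrix.ext fun i j => h (i, j))
  set N : ℝ := ∑ p : Fin m × Fin m, ‖A p.1 p.2‖ ^ 2 with hN
  have hNpos : 0 < N :=
    Finset.sum_pos' (fun _ _ => sq_nonneg _)
      ⟨p₀, Finset.mem_univ _, pow_pos (norm_pos_iff.2 hp₀) 2⟩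
  have hNc : ((N : ℝ) : ℂ) ≠ 0 := by
    exact_mod_cast (ne_of_gt hNpos)
  have hxne : (fun p : Fin m × Fin m => A p.1 p.2) ≠ 0 := by
    intro h0
    exact hp₀ (congrFun h0 p₀)
  have ht : A p₀.1 p₀.2 * conj (A p₀.1 p₀.2) ≠ 0 :=
    mul_ne_zero hp₀ (by simpa using hp₀)
  constructor
  · rintro ⟨-, lam, hlam, hrel⟩
    have hlc : ((lam : ℝ) : ℂ) ≠ 0 := by exact_mod_cast (ne_of_gt hlam)
    refine ⟨N ^ 2 / lam, by positivity, ?_⟩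
    ext k r
    have h := (Matrix.ext_iff.2 hrel) (p₀.1, p₀.2, k) (p₀.1, p₀.2, r)
    rw [lhs_entry, rhs_entry] at h
    simp only at h
    rw [BB_entry]
    have hs : (∑ a, ∑ b, ∑ c, conj (A a b) * A b k * (conj (A c r) * A a c)) =
        ((N : ℂ)) ^ 2 * ((lam : ℝ) : ℂ)⁻¹ * (if k = r then 1 else 0) := by
      calc (∑ a, ∑ b, ∑ c, conj (A a b) * A b k * (conj (A c r) * A a c))
          = (N : ℂ) ^ 3 * (A p₀.1 p₀.2 * conj (A p₀.1 p₀.2))⁻¹ *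
            (((N : ℂ))⁻¹ ^ 3 * (A p₀.1 p₀.2 * conj (A p₀.1 p₀.2)) *
              ∑ a, ∑ b, ∑ c, conj (A a b) * A b k * (conj (A c r) * A a c)) := by
            field_simp [(map_ne_zero (starRingEnd ℂ)).2 hp₀]
        _ = (N : ℂ) ^ 3 * (A p₀.1 p₀.2 * conj (A p₀.1 p₀.2))⁻¹ *
            (((lam : ℝ) : ℂ))⁻¹ * ((N : ℂ))⁻¹ *
              (A p₀.1 p₀.2 * conj (A p₀.1 p₀.2)) * (if k = r then 1 else 0) := by
            rw [h]; ring
        _ = ((N : ℂ)) ^ 2 * ((lam : ℝ) : ℂ)⁻¹ * (if k = r then 1 else 0) := by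
            field_simp [(map_ne_zero (starRingEnd ℂ)).2 hp₀]
    rw [hs]
    simp only [Matrix.smul_apply, Matrix.one_apply, smul_eq_mul]
    push_cast [div_eq_mul_inv]
    by_cases hkr : k = r <;> simp [hkr]
  · rintro ⟨c, hc, hBB⟩
    have hcc : ((c : ℝ) : ℂ) ≠ 0 := by exact_mod_cast (ne_of_gt hc)
    refine ⟨hxne, N ^ 2 / c, by positivity, ?_⟩
    have hB : ∀ k r, (∑ a, ∑ b, ∑ c', conj (A a b) * A b k * (conj (A c' r) * A a c')) =
        ((c : ℝ) : ℂ) * (if k = r then 1 else 0) := by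
      intro k r
      rw [← BB_entry, hBB]
      simp [Matrix.smul_apply, Matrix.one_apply]
    ext x y
    rw [lhs_entry, rhs_entry, hB]
    have hcast : ((N ^ 2 / c : ℝ) : ℂ) = (N : ℂ) ^ 2 / (c : ℂ) := by push_cast; ring
    rw [hcast]
    by_cases hkr : x.2.2 = y.2.2
    · simp only [hkr, if_true, mul_one]
      field_simp
      rw [hN]
      push_cast
      have hS := hNc
      rw [hN] at hS
      push_cast at hS
      field_simp
    · simp [hkr]
end
end
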